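/- Define h : [0,∞) → ℝ by h(z) = (1/(2π)) ∫₀^{2π} e^{−(z/2)(1 − cos θ)} dθ. Then h(0) = 1, 0 < h(z) ≤ 1 for all z ≥ 0, h is twice continuously differentiable on (0,∞), and h solves the ordinary differential equation h''(z) + (1/z + 1) h'(z) + (1/(2z)) h(z) = 0 for every z > 0. -/

import Mathlib

/-!
Write `u(θ) = (1 - cos θ)/2 ∈ [0, 1]`, so that `h(z)` is the mean of `e^{-z u}` over a period.
Since `u` is bounded, one may differentiate under the integral sign as often as one likes:
`h^{(n)}(z)` is the mean of `(-u)^n e^{-z u}`. The ODE is then the integral over a period of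
the exact derivative `d/dθ [(sin θ / 2) e^{-z u(θ)}] = (z u² - (z + 1) u + 1/2) e^{-z u(θ)}`,
which follows from `sin² θ = 4u(1 - u)` and `cos θ = 1 - 2u`.
-/

open MeasureTheory Real

/-- The explicit function `h(z) = (1/2π) ∫₀^{2π} e^{−(z/2)(1−cos θ)} dθ`. -/
noncomputable def hexp (z : ℝ) : ℝ :=
  (1 / (2 * Real.pi)) * ∫ θ in (0 : ℝ)..(2 * Real.pi), Real.exp (-(z / 2) * (1 - Real.cos θ))

open scoped ContDiff

namespace Hexp

noncomputable def haversin (θ : ℝ) : ℝ := (1 - cos θ) / 2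

lemma haversin_nonneg (θ : ℝ) : 0 ≤ haversin θ := by
  unfold haversin; linarith [cos_le_one θ]

lemma haversin_le_one (θ : ℝ) : haversin θ ≤ 1 := by
  unfold haversin; linarith [neg_one_le_cos θ]

@[fun_prop]
lemma continuous_haversin : Continuous haversin := by
  unfold haversin; fun_prop

lemma norm_neg_pow_mul_exp_le {u : ℝ} (hu₀ : 0 ≤ u) (hu₁ : u ≤ 1) (n : ℕ) (x : ℝ) :
    ‖(-u) ^ n * exp (-(x * u))‖ ≤ exp |x| := by
  rw [norm_mul, norm_pow, norm_neg, norm_of_nonneg hu₀, norm_of_nonneg (exp_pos _).le]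
  have hexp_le : exp (-(x * u)) ≤ exp |x| := by
    refine exp_le_exp.2 ?_
    calc -(x * u) ≤ |x| * u := by nlinarith [neg_abs_le x]
      _ ≤ |x| := mul_le_of_le_one_right (abs_nonneg x) hu₁
  simpa using mul_le_mul (pow_le_one₀ hu₀ hu₁) hexp_le (exp_pos _).le zero_le_one

noncomputable def integrandDeriv (n : ℕ) (z θ : ℝ) : ℝ :=
  (-haversin θ) ^ n * exp (-(z * haversin θ))

@[fun_prop]
lemma continuous_integrandDeriv (n : ℕ) (z : ℝ) : Continuous (integrandDeriv n z) := by
  unfold integrandDeriv; fun_prop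

lemma hasDerivAt_integrandDeriv (n : ℕ) (z θ : ℝ) :
    HasDerivAt (fun z ↦ integrandDeriv n z θ) (integrandDeriv (n + 1) z θ) z := by
  have h := (((hasDerivAt_id z).mul_const (haversin θ)).neg.exp).const_mul
    ((-haversin θ) ^ n)
  exact h.congr_deriv (by simp only [integrandDeriv, pow_succ, id, Pi.neg_apply]; ring)

noncomputable def hexpDeriv (n : ℕ) (z : ℝ) : ℝ :=
  (1 / (2 * π)) * ∫ θ in (0 : ℝ)..(2 * π), integrandDeriv n z θ

lemma hexp_eq_hexpDeriv_zero : hexp = hexpDeriv 0 := by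
  funext z
  simp only [hexp, hexpDeriv, integrandDeriv, haversin, pow_zero, one_mul]
  congr 2 with θ
  ring_nf

lemma hasDerivAt_hexpDeriv (n : ℕ) (z : ℝ) :
    HasDerivAt (hexpDeriv n) (hexpDeriv (n + 1) z) z := by
  have hbound :
      ∀ θ, ∀ x ∈ Metric.ball z 1, ‖integrandDeriv (n + 1) x θ‖ ≤ exp (|z| + 1) := by
    intro θ x hx
    refine (norm_neg_pow_mul_exp_le (haversin_nonneg θ) (haversin_le_one θ) _ x).trans ?_
    refine exp_le_exp.2 ?_
    have := abs_sub_abs_le_abs_sub x z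
    rw [Metric.mem_ball, dist_eq] at hx
    linarith
  refine HasDerivAt.const_mul _ (intervalIntegral.hasDerivAt_integral_of_dominated_loc_of_deriv_le
    (Metric.ball_mem_nhds z one_pos)
    (.of_forall fun x ↦ (continuous_integrandDeriv n x).aestronglyMeasurable)
    ((continuous_integrandDeriv n z).intervalIntegrable _ _)
    (continuous_integrandDeriv (n + 1) z).aestronglyMeasurable
    (.of_forall fun θ _ ↦ hbound θ) intervalIntegrable_const
    (.of_forall fun θ _ x _ ↦ hasDerivAt_integrandDeriv n x θ)).2

lemma deriv_hexpDeriv (n : ℕ) : deriv (hexpDeriv n) = hexpDeriv (n + 1) :=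
  funext fun z ↦ (hasDerivAt_hexpDeriv n z).deriv

lemma contDiff_hexpDeriv (k n : ℕ) : ContDiff ℝ k (hexpDeriv n) := by
  induction k generalizing n with
  | zero =>
    exact contDiff_zero.2 (continuous_iff_continuousAt.2 fun z ↦
      (hasDerivAt_hexpDeriv n z).continuousAt)
  | succ k ih =>
    rw [Nat.cast_succ, contDiff_succ_iff_deriv, deriv_hexpDeriv]
    exact ⟨fun z ↦ (hasDerivAt_hexpDeriv n z).differentiableAt, by simp, ih (n + 1)⟩

lemma contDiff_hexp : ContDiff ℝ ∞ hexp :=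
  hexp_eq_hexpDeriv_zero ▸ contDiff_infty.2 fun k ↦ contDiff_hexpDeriv k 0

lemma hasDerivAt_sin_mul_exp (z θ : ℝ) :
    HasDerivAt (fun θ ↦ sin θ / 2 * exp (-(z * haversin θ)))
      (z * integrandDeriv 2 z θ + (z + 1) * integrandDeriv 1 z θ + integrandDeriv 0 z θ / 2)
      θ := by
  have hhav : HasDerivAt haversin (sin θ / 2) θ := by
    unfold haversin
    simpa using ((hasDerivAt_cos θ).const_sub 1).div_const 2
  have h := ((hasDerivAt_sin θ).div_const 2).mul ((hhav.const_mul z).neg.exp)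
  refine h.congr_deriv ?_
  simp only [integrandDeriv, haversin]
  linear_combination (-(z * exp (-(z * ((1 - cos θ) / 2)))) / 4) * sin_sq_add_cos_sq θ

lemma hexpDeriv_ode (z : ℝ) :
    z * hexpDeriv 2 z + (z + 1) * hexpDeriv 1 z + hexpDeriv 0 z / 2 = 0 := by
  have hint : ∀ n, IntervalIntegrable (integrandDeriv n z) volume 0 (2 * π) :=
    fun n ↦ (continuous_integrandDeriv n z).intervalIntegrable _ _
  have hperiod : ∫ θ in (0 : ℝ)..(2 * π), (z * integrandDeriv 2 z θ +
      (z + 1) * integrandDeriv 1 z θ + integrandDeriv 0 z θ / 2) = 0 := by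
    rw [intervalIntegral.integral_eq_sub_of_hasDerivAt (fun θ _ ↦ hasDerivAt_sin_mul_exp z θ)
      (Continuous.intervalIntegrable (by fun_prop) _ _)]
    simp
  rw [intervalIntegral.integral_add (((hint 2).const_mul z).add ((hint 1).const_mul _))
      ((hint 0).div_const 2), intervalIntegral.integral_add ((hint 2).const_mul z)
      ((hint 1).const_mul _), intervalIntegral.integral_const_mul,
    intervalIntegral.integral_const_mul, intervalIntegral.integral_div] at hperiod
  simp only [hexpDeriv]
  linear_combination (1 / (2 * π)) * hperiod

lemma hexp_zero : hexp 0 = 1 := by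
  simp only [hexp, zero_div, neg_zero, zero_mul, exp_zero, intervalIntegral.integral_const,
    sub_zero, smul_eq_mul, mul_one]
  field_simp

lemma hexp_pos (z : ℝ) : 0 < hexp z :=
  mul_pos (by positivity) (intervalIntegral.intervalIntegral_pos_of_pos
    (Continuous.intervalIntegrable (by fun_prop) _ _) (fun _ ↦ exp_pos _) two_pi_pos)

lemma hexp_le_one {z : ℝ} (hz : 0 ≤ z) : hexp z ≤ 1 := by
  have hpt (θ : ℝ) : exp (-(z / 2) * (1 - cos θ)) ≤ 1 :=
    exp_le_one_iff.2 (by nlinarith [cos_le_one θ])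
  have hle : ∫ θ in (0 : ℝ)..(2 * π), exp (-(z / 2) * (1 - cos θ)) ≤
      ∫ _ in (0 : ℝ)..(2 * π), (1 : ℝ) :=
    intervalIntegral.integral_mono_on two_pi_pos.le
      (Continuous.intervalIntegrable (by fun_prop) _ _) intervalIntegrable_const fun θ _ ↦ hpt θ
  calc hexp z ≤ 1 / (2 * π) * ∫ _ in (0 : ℝ)..(2 * π), (1 : ℝ) :=
        mul_le_mul_of_nonneg_left hle (by positivity)
    _ = 1 := by
      rw [intervalIntegral.integral_const, sub_zero, smul_eq_mul, mul_one]
      field_simp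

end Hexp

open Hexp in
theorem stmt_14 :
    hexp 0 = 1 ∧
    (∀ z : ℝ, 0 ≤ z → 0 < hexp z ∧ hexp z ≤ 1) ∧
    ContDiffOn ℝ 2 hexp (Set.Ioi 0) ∧
    (∀ z : ℝ, 0 < z →
      deriv (deriv hexp) z + (1 / z + 1) * deriv hexp z + (1 / (2 * z)) * hexp z = 0) := by
  refine ⟨hexp_zero, fun z hz ↦ ⟨hexp_pos z, hexp_le_one hz⟩,
    (contDiff_hexp.of_le (by norm_cast)).contDiffOn, fun z hz ↦ ?_⟩
  rw [hexp_eq_hexpDeriv_zero, deriv_hexpDeriv, deriv_hexpDeriv]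
  field_simp
  linear_combination 2 * hexpDeriv_ode z
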